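/- arXiv:1508.00824 — 4 statements merged into one kernel-verified Lean document; each statement's English description precedes it below -/
import Mathlib

section
/- Let n, n1, n2, n3 be integers with n = n1 - n2 + n3, n1 ≠ n, and n3 ≠ n. Then |n1^4 - n2^4 + n3^4 - n^4| ≥ 1; in particular the phase φ(n̄) = n1^4 - n2^4 + n3^4 - n^4 is nonzero. -/
theorem phase_lower_bound_one (n n1 n2 n3 : ℤ) (h : n = n1 - n2 + n3)
    (h1 : n1 ≠ n) (h3 : n3 ≠ n) :
    1 ≤ |n1^4 - n2^4 + n3^4 - n^4| ∧ n1^4 - n2^4 + n3^4 - n^4 ≠ 0 := by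
  have hn2 : n2 = n1 + n3 - n := by omega
  have ha : n1 - n ≠ 0 := sub_ne_zero.mpr h1
  have hb : n3 - n ≠ 0 := sub_ne_zero.mpr h3
  have hQ : 3*(2*n + (n1 - n) + (n3 - n))^2 + (n1 - n)^2 + (n3 - n)^2 ≠ 0 := by
    positivity
  have hfac : n1^4 - n2^4 + n3^4 - n^4 =
      -((n1 - n) * (n3 - n) * (3*(2*n + (n1 - n) + (n3 - n))^2 + (n1 - n)^2 + (n3 - n)^2)) := by
    subst hn2; ring
  have hne : n1^4 - n2^4 + n3^4 - n^4 ≠ 0 := by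
    rw [hfac]
    exact neg_ne_zero.mpr (mul_ne_zero (mul_ne_zero ha hb) hQ)
  exact ⟨Int.one_le_abs hne, hne⟩
end

section
/- Let n, n1, n2, n3 be integers with n = n1 - n2 + n3, n1 ≠ n, n3 ≠ n, and set φ = n1^4 - n2^4 + n3^4 - n^4. Then |φ| ≥ |n - n1| · |n - n3| · max(n^2, n1^2, n2^2, n3^2). -/
theorem phase_lower_bound_max (n n1 n2 n3 : ℤ) (h : n = n1 - n2 + n3)
    (h1 : n1 ≠ n) (h3 : n3 ≠ n) :
    |n - n1| * |n - n3| * max (n^2) (max (n1^2) (max (n2^2) (n3^2)))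
      ≤ |n1^4 - n2^4 + n3^4 - n^4| := by
  have key : n1^4 - n2^4 + n3^4 - n^4
      = -((n - n1) * (n - n3) * (n1^2 + n2^2 + n3^2 + n^2 + 2*(n1+n3)^2)) := by
    subst h; ring
  rw [key, abs_neg, abs_mul, abs_mul]
  have hF : |n1^2 + n2^2 + n3^2 + n^2 + 2*(n1+n3)^2|
      = n1^2 + n2^2 + n3^2 + n^2 + 2*(n1+n3)^2 := abs_of_nonneg (by positivity)
  rw [hF]
  have hmax : max (n^2) (max (n1^2) (max (n2^2) (n3^2)))
      ≤ n1^2 + n2^2 + n3^2 + n^2 + 2*(n1+n3)^2 := by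
    simp only [max_le_iff]
    refine ⟨?_, ?_, ?_, ?_⟩ <;> nlinarith [sq_nonneg n, sq_nonneg n1, sq_nonneg n2, sq_nonneg n3, sq_nonneg (n1+n3)]
  exact mul_le_mul_of_nonneg_left hmax (by positivity)
end

section
/- Let s > 1/6 and let v, w, z ∈ H^s(𝕋) with Fourier coefficients v_n, w_n, z_n. Then for each integer n, the sum over (n1,n2,n3) ∈ ℤ^3 with n = n1 - n2 + n3 of |v_{n1}| |w_{n2}| |z_{n3}| is finite, and in fact bounded by C ‖v‖_{H^{1/6}} ‖w‖_{H^{1/6}} ‖z‖_{H^{1/6}}, uniformly in n. -/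
open Real Finset

namespace Tri

noncomputable abbrev J (m : ℤ) : ℝ := 1 + (m : ℝ) ^ 2

lemma J_pos (m : ℤ) : 0 < J m := by positivity

lemma one_le_J (m : ℤ) : 1 ≤ J m := by
  have := sq_nonneg (m : ℝ); simp only [J]; linarith

noncomputable def h (j m : ℤ) : ℝ := if J j ≤ J m then (J j) ^ (-(1/3) : ℝ) else 0

lemma h_nonneg (j m : ℤ) : 0 ≤ h j m := by
  unfold h; split <;> positivity

lemma step (N : ℕ) : ((N : ℝ) + 1) ^ (-(2/3) : ℝ) ≤
    3 * (((N : ℝ) + 1) ^ ((1/3) : ℝ) - (N : ℝ) ^ ((1/3) : ℝ)) := by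
  set a := (N : ℝ) ^ ((1/3) : ℝ) with ha
  set b := ((N : ℝ) + 1) ^ ((1/3) : ℝ) with hb
  have hN : (0:ℝ) ≤ N := Nat.cast_nonneg N
  have hb0 : 0 < b := rpow_pos_of_pos (by linarith) _
  have ha0 : 0 ≤ a := rpow_nonneg hN _
  have hab : a ≤ b := rpow_le_rpow hN (by linarith) (by norm_num)
  have ha3 : a ^ 3 = (N : ℝ) := by
    rw [ha, ← rpow_natCast ((N:ℝ) ^ ((1/3):ℝ)) 3, ← rpow_mul hN]; norm_num
  have hb3 : b ^ 3 = (N : ℝ) + 1 := by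
    rw [hb, ← rpow_natCast (((N:ℝ)+1) ^ ((1/3):ℝ)) 3, ← rpow_mul (by linarith)]; norm_num
  have hkey : ((N : ℝ) + 1) ^ (-(2/3) : ℝ) * b ^ 2 = 1 := by
    have : b ^ 2 = ((N : ℝ) + 1) ^ ((2/3) : ℝ) := by
      rw [hb, ← rpow_natCast (((N:ℝ)+1) ^ ((1/3):ℝ)) 2, ← rpow_mul (by linarith)]; norm_num
    rw [this, ← rpow_add (by linarith)]; norm_num
  have h1 : 1 ≤ 3 * (b - a) * b ^ 2 := by nlinarith [sq_nonneg (b - a), sq_nonneg a, sq_nonneg b]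
  have hb2 : (0:ℝ) < b ^ 2 := by positivity
  nlinarith [hkey, h1, hb2]

lemma sum13 (M : ℕ) : ∑ k ∈ range M, ((k : ℝ) + 1) ^ (-(2/3) : ℝ) ≤ 3 * (M : ℝ) ^ ((1/3) : ℝ) := by
  induction M with
  | zero => simp
  | succ M ih =>
      rw [Finset.sum_range_succ]
      have := step M
      push_cast
      push_cast at ih ⊢
      linarith

lemma h_eq_zero {j m : ℤ} (hj : j ∉ Finset.Icc (-(m.natAbs : ℤ)) (m.natAbs : ℤ)) :
    h j m = 0 := by
  unfold h
  rw [if_neg]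
  intro H
  have h2 : (j:ℝ)^2 ≤ (m:ℝ)^2 := by simpa [J] using H
  have h3 : |(j:ℝ)| ≤ |(m:ℝ)| := sq_le_sq.mp h2
  rw [← Int.cast_abs, ← Int.cast_abs, Int.cast_le, Int.abs_eq_natAbs, Int.abs_eq_natAbs] at h3
  simp only [Finset.mem_Icc] at hj
  omega

lemma h_neg (k : ℕ) (m : ℤ) : h (-(k:ℤ)) m = h (k:ℤ) m := by
  unfold h J; push_cast; norm_num

lemma one_le_rpow_J (m : ℤ) (e : ℝ) (he : 0 ≤ e) : 1 ≤ (J m) ^ e := by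
  calc (1:ℝ) = (1:ℝ) ^ e := (one_rpow e).symm
    _ ≤ (J m) ^ e := rpow_le_rpow zero_le_one (one_le_J m) he

lemma count (m : ℤ) (s : Finset ℤ) : ∑ j ∈ s, h j m ≤ 8 * (J m) ^ ((1/6) : ℝ) := by
  classical
  set M := m.natAbs with hM
  set T : Finset ℤ := Finset.Icc (-(M:ℤ)) (M:ℤ) with hT
  have h1 : ∑ j ∈ s, h j m = ∑ j ∈ s ∩ T, h j m := by
    refine (Finset.sum_subset Finset.inter_subset_left fun x hx hnx => ?_).symm
    exact h_eq_zero fun hT' => hnx (Finset.mem_inter.2 ⟨hx, hT'⟩)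
  have h2 : ∑ j ∈ s ∩ T, h j m ≤ ∑ j ∈ T, h j m :=
    Finset.sum_le_sum_of_subset_of_nonneg Finset.inter_subset_right fun j _ _ => h_nonneg j m
  set A := (range (M+1)).image (fun k : ℕ => (k:ℤ)) with hA
  set B := (range (M+1)).image (fun k : ℕ => -(k:ℤ)) with hB
  have hTsub : T ⊆ A ∪ B := by
    intro j hj
    simp only [hT, Finset.mem_Icc] at hj
    simp only [hA, hB, Finset.mem_union, Finset.mem_image, Finset.mem_range]
    rcases le_or_gt 0 j with h0 | h0
    · exact Or.inl ⟨j.toNat, by omega, by omega⟩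
    · exact Or.inr ⟨(-j).toNat, by omega, by omega⟩
  have h3 : ∑ j ∈ T, h j m ≤ ∑ j ∈ A ∪ B, h j m :=
    Finset.sum_le_sum_of_subset_of_nonneg hTsub fun j _ _ => h_nonneg j m
  have h4 : ∑ j ∈ A ∪ B, h j m ≤ ∑ j ∈ A, h j m + ∑ j ∈ B, h j m := by
    rw [← Finset.union_sdiff_self_eq_union, Finset.sum_union Finset.disjoint_sdiff]
    exact add_le_add le_rfl
      (Finset.sum_le_sum_of_subset_of_nonneg Finset.sdiff_subset fun j _ _ => h_nonneg j m)
  have hAeq : ∑ j ∈ A, h j m = ∑ k ∈ range (M+1), h (k:ℤ) m :=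
    Finset.sum_image fun a _ b _ hab => by exact_mod_cast hab
  have hBeq : ∑ j ∈ B, h j m = ∑ k ∈ range (M+1), h (k:ℤ) m := by
    rw [Finset.sum_image fun a _ b _ hab => by omega]
    exact Finset.sum_congr rfl fun k _ => h_neg k m
  have hstep : ∀ k : ℕ, h ((k:ℤ)+1) m ≤ ((k:ℝ) + 1) ^ (-(2/3) : ℝ) := by
    intro k
    unfold h
    split
    · have hx : (0:ℝ) < ((k:ℝ)+1)^2 := by positivity
      have hle : ((k:ℝ)+1)^2 ≤ J ((k:ℤ)+1) := by
        simp only [J]; push_cast; nlinarith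
      calc (J ((k:ℤ)+1)) ^ (-(1/3) : ℝ) ≤ (((k:ℝ)+1)^2) ^ (-(1/3) : ℝ) :=
            rpow_le_rpow_of_nonpos hx hle (by norm_num)
        _ = ((k:ℝ)+1) ^ (-(2/3) : ℝ) := by
            rw [← rpow_natCast ((k:ℝ)+1) 2, ← rpow_mul (by positivity)]; norm_num
    · positivity
  have hR : ∑ k ∈ range (M+1), h (k:ℤ) m ≤ 1 + 3 * (M:ℝ) ^ ((1/3):ℝ) := by
    rw [Finset.sum_range_succ']
    have hzero : h ((0:ℕ):ℤ) m = 1 := by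
      unfold h
      rw [if_pos (by simpa using one_le_J m)]
      norm_num
    have hsum : ∑ k ∈ range M, h ((k:ℕ)+1 : ℤ) m ≤ 3 * (M:ℝ) ^ ((1/3):ℝ) := by
      calc ∑ k ∈ range M, h ((k:ℕ)+1 : ℤ) m ≤ ∑ k ∈ range M, ((k:ℝ)+1) ^ (-(2/3):ℝ) :=
            Finset.sum_le_sum fun k _ => by exact_mod_cast hstep k
        _ ≤ 3 * (M:ℝ) ^ ((1/3):ℝ) := sum13 M
    push_cast at hsum hzero ⊢
    linarith
  have e1 : (1:ℝ) ≤ (J m) ^ ((1/6):ℝ) := one_le_rpow_J m _ (by norm_num)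
  have e2 : (M:ℝ) ^ ((1/3):ℝ) ≤ (J m) ^ ((1/6):ℝ) := by
    have hM2 : ((M:ℝ))^2 = (m:ℝ)^2 := by
      rw [hM, Nat.cast_natAbs]; push_cast; rw [sq_abs]
    calc (M:ℝ) ^ ((1/3):ℝ) = ((M:ℝ)^2) ^ ((1/6):ℝ) := by
          rw [← rpow_natCast (M:ℝ) 2, ← rpow_mul (Nat.cast_nonneg M)]; norm_num
      _ ≤ (J m) ^ ((1/6):ℝ) := by
          apply rpow_le_rpow (by positivity) _ (by norm_num)
          rw [hM2]; simp only [J]; linarith [sq_nonneg (m:ℝ)]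
  calc ∑ j ∈ s, h j m ≤ ∑ j ∈ A, h j m + ∑ j ∈ B, h j m := by
        rw [h1]; exact h2.trans (h3.trans h4)
    _ = 2 * ∑ k ∈ range (M+1), h (k:ℤ) m := by rw [hAeq, hBeq]; ring
    _ ≤ 2 * (1 + 3 * (M:ℝ) ^ ((1/3):ℝ)) := by linarith [hR]
    _ ≤ 8 * (J m) ^ ((1/6) : ℝ) := by linarith

end Tri

namespace Tri2
open Tri

lemma h_summable (m : ℤ) : Summable fun j => h j m :=
  summable_of_ne_finset_zero (s := Finset.Icc (-(m.natAbs : ℤ)) (m.natAbs : ℤ))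
    fun _ hj => h_eq_zero hj

lemma tsum_h_le (m : ℤ) : ∑' j, h j m ≤ 8 * (J m) ^ ((1/6) : ℝ) :=
  Summable.tsum_le_of_sum_le (h_summable m) (count m)

lemma cs {ι : Type*} {X Y : ι → ℝ} (hX0 : ∀ p, 0 ≤ X p) (hY0 : ∀ p, 0 ≤ Y p)
    (hX : Summable fun p => X p ^ 2) (hY : Summable fun p => Y p ^ 2) :
    Summable (fun p => X p * Y p) ∧
      ∑' p, X p * Y p ≤ √(∑' p, X p ^ 2) * √(∑' p, Y p ^ 2) := by
  have hs : Summable fun p => X p * Y p := by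
    apply Summable.of_nonneg_of_le (fun p => mul_nonneg (hX0 p) (hY0 p))
      (fun p => ?_) ((hX.add hY).div_const 2)
    nlinarith [sq_nonneg (X p - Y p)]
  refine ⟨hs, Summable.tsum_le_of_sum_le hs fun s => ?_⟩
  calc ∑ p ∈ s, X p * Y p ≤ √(∑ p ∈ s, X p ^ 2) * √(∑ p ∈ s, Y p ^ 2) :=
        Real.sum_mul_le_sqrt_mul_sqrt s X Y
    _ ≤ √(∑' p, X p ^ 2) * √(∑' p, Y p ^ 2) :=
        mul_le_mul (Real.sqrt_le_sqrt (Summable.sum_le_tsum s (fun i _ => sq_nonneg _) hX))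
          (Real.sqrt_le_sqrt (Summable.sum_le_tsum s (fun i _ => sq_nonneg _) hY))
          (Real.sqrt_nonneg _) (Real.sqrt_nonneg _)

lemma prodMul {f g : ℤ → ℝ} (hf0 : ∀ i, 0 ≤ f i) (hg0 : ∀ i, 0 ≤ g i)
    (hf : Summable f) (hg : Summable g) :
    Summable (fun p : ℤ × ℤ => f p.1 * g p.2) ∧
      ∑' p : ℤ × ℤ, f p.1 * g p.2 = (∑' i, f i) * (∑' i, g i) := by
  have hs := hf.mul_of_nonneg hg hf0 hg0
  refine ⟨hs, ?_⟩
  rw [Summable.tsum_prod' hs fun b => hg.mul_left (f b)]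
  simp_rw [tsum_mul_left]
  exact tsum_mul_right

lemma psi {b : ℤ → ℝ} (hb0 : ∀ m, 0 ≤ b m)
    (hb : Summable fun m => (J m) ^ ((1/6) : ℝ) * b m) :
    Summable (fun q : ℤ × ℤ => b q.1 * h q.2 q.1) ∧
      ∑' q : ℤ × ℤ, b q.1 * h q.2 q.1 ≤ 8 * ∑' m, (J m) ^ ((1/6) : ℝ) * b m := by
  have hinner : ∀ m, Summable fun j => b m * h j m := fun m => (h_summable m).mul_left _
  have hinsum : ∀ m, ∑' j, b m * h j m ≤ 8 * ((J m) ^ ((1/6) : ℝ) * b m) := by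
    intro m
    rw [tsum_mul_left]
    calc b m * ∑' j, h j m ≤ b m * (8 * (J m) ^ ((1/6) : ℝ)) :=
          mul_le_mul_of_nonneg_left (tsum_h_le m) (hb0 m)
      _ = 8 * ((J m) ^ ((1/6) : ℝ) * b m) := by ring
  have h8 : Summable fun m => 8 * ((J m) ^ ((1/6) : ℝ) * b m) := hb.mul_left 8
  have houter : Summable fun m => ∑' j, b m * h j m :=
    Summable.of_nonneg_of_le
      (fun m => tsum_nonneg fun j => mul_nonneg (hb0 m) (h_nonneg j m)) hinsum h8
  have hsum : Summable (fun q : ℤ × ℤ => b q.1 * h q.2 q.1) :=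
    (summable_prod_of_nonneg fun q => mul_nonneg (hb0 _) (h_nonneg _ _)).2 ⟨hinner, houter⟩
  refine ⟨hsum, ?_⟩
  rw [Summable.tsum_prod' hsum hinner]
  calc ∑' m, ∑' j, b m * h j m ≤ ∑' m, 8 * ((J m) ^ ((1/6) : ℝ) * b m) :=
        Summable.tsum_le_tsum hinsum houter h8
    _ = 8 * ∑' m, (J m) ^ ((1/6) : ℝ) * b m := tsum_mul_left

def eA (n : ℤ) : ℤ × ℤ ≃ ℤ × ℤ where
  toFun q := (q.2, q.1 - q.2 + n)
  invFun p := (p.1 + p.2 - n, p.1)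
  left_inv q := by obtain ⟨a, b⟩ := q; simp only [Prod.mk.injEq, and_true, true_and]; ring
  right_inv p := by obtain ⟨a, b⟩ := p; simp only [Prod.mk.injEq, and_true, true_and]; ring

def eB (n : ℤ) : ℤ × ℤ ≃ ℤ × ℤ where
  toFun q := (q.1 - q.2 + n, q.2)
  invFun p := (p.1 + p.2 - n, p.2)
  left_inv q := by obtain ⟨a, b⟩ := q; simp only [Prod.mk.injEq, and_true, true_and]; ring
  right_inv p := by obtain ⟨a, b⟩ := p; simp only [Prod.mk.injEq, and_true, true_and]; ring

def eC (n : ℤ) : ℤ × ℤ ≃ ℤ × ℤ where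
  toFun q := (q.2 - q.1 + n, q.1)
  invFun p := (p.2, p.1 + p.2 - n)
  left_inv q := by obtain ⟨a, b⟩ := q; simp only [Prod.mk.injEq, and_true, true_and]; ring
  right_inv p := by obtain ⟨a, b⟩ := p; simp only [Prod.mk.injEq, and_true, true_and]; ring

def eX (n : ℤ) : ℤ × ℤ ≃ ℤ × ℤ where
  toFun q := (q.1, q.2 - q.1 + n)
  invFun p := (p.1, p.1 + p.2 - n)
  left_inv q := by obtain ⟨a, b⟩ := q; simp only [Prod.mk.injEq, and_true, true_and]; ring
  right_inv p := by obtain ⟨a, b⟩ := p; simp only [Prod.mk.injEq, and_true, true_and]; ring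

lemma cancel (j : ℤ) : (J j) ^ ((1/12) : ℝ) * (J j) ^ (-(1/12) : ℝ) = 1 := by
  rw [← rpow_add (J_pos j)]
  norm_num

lemma sq_rpow (j : ℤ) (e : ℝ) : ((J j) ^ e) ^ 2 = (J j) ^ (2 * e) := by
  rw [← rpow_natCast ((J j) ^ e) 2, ← rpow_mul (J_pos j).le]
  norm_num
  ring_nf

lemma neg_mul_le {i j : ℤ} (hij : J i ≤ J j) :
    (J i) ^ (-(1/6) : ℝ) * (J j) ^ (-(1/6) : ℝ) ≤ (J i) ^ (-(1/3) : ℝ) := by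
  calc (J i) ^ (-(1/6) : ℝ) * (J j) ^ (-(1/6) : ℝ)
      ≤ (J i) ^ (-(1/6) : ℝ) * (J i) ^ (-(1/6) : ℝ) := by
        apply mul_le_mul_of_nonneg_left (rpow_le_rpow_of_nonpos (J_pos i) hij (by norm_num))
          (by positivity)
    _ = (J i) ^ (-(1/3) : ℝ) := by rw [← rpow_add (J_pos i)]; norm_num

end Tri2

namespace Tri2
open Tri

lemma mul_cancel₃ (i j : ℤ) (x y u : ℝ) :
    ((J i) ^ ((1/12):ℝ) * x) * ((J j) ^ ((1/12):ℝ) * y) *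
      (u * ((J i) ^ (-(1/12):ℝ) * (J j) ^ (-(1/12):ℝ))) = x * u * y := by
  have c1 := cancel i
  have c2 := cancel j
  linear_combination (x * y * u * ((J j) ^ ((1/12):ℝ) * (J j) ^ (-(1/12):ℝ))) * c1
    + (x * y * u) * c2

end Tri2

/-- Square of the `H^s(𝕋)` norm in terms of Fourier coefficients:
`‖v‖_{H^s}^2 = Σ_m ⟨m⟩^{2s} |v_m|^2` with `⟨m⟩^{2s} = (1+m^2)^s`. -/
noncomputable def sobolevNormSq (s : ℝ) (v : ℤ → ℂ) : ℝ :=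
  ∑' m : ℤ, ((1 + (m : ℝ)^2) ^ s) * ‖v m‖^2

noncomputable def sobolevNorm (s : ℝ) (v : ℤ → ℂ) : ℝ :=
  Real.sqrt (sobolevNormSq s v)

open Tri Tri2 in
theorem trilinear_sum_bound :
    ∃ C : ℝ, 0 < C ∧ ∀ s : ℝ, 1/6 < s → ∀ v w z : ℤ → ℂ,
      Summable (fun m : ℤ => ((1 + (m : ℝ)^2) ^ s) * ‖v m‖^2) →
      Summable (fun m : ℤ => ((1 + (m : ℝ)^2) ^ s) * ‖w m‖^2) →
      Summable (fun m : ℤ => ((1 + (m : ℝ)^2) ^ s) * ‖z m‖^2) →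
      ∀ n : ℤ,
        Summable (fun p : ℤ × ℤ => ‖v p.1‖ * ‖w (p.1 + p.2 - n)‖ * ‖z p.2‖) ∧
        (∑' p : ℤ × ℤ, ‖v p.1‖ * ‖w (p.1 + p.2 - n)‖ * ‖z p.2‖)
          ≤ C * sobolevNorm (1/6) v * sobolevNorm (1/6) w * sobolevNorm (1/6) z := by
  classical
  refine ⟨7, by norm_num, ?_⟩
  intro s hs v w z hv hw hz n
  have key : ∀ u : ℤ → ℂ, Summable (fun m : ℤ => ((1 + (m:ℝ)^2) ^ s) * ‖u m‖^2) →
      Summable (fun m : ℤ => (J m) ^ ((1/6):ℝ) * ‖u m‖^2) := by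
    intro u hu
    refine Summable.of_nonneg_of_le (fun m => by positivity) (fun m => ?_) hu
    exact mul_le_mul_of_nonneg_right
      (rpow_le_rpow_of_exponent_le (one_le_J m) hs.le) (by positivity)
  have hv6 := key v hv
  have hw6 := key w hw
  have hz6 := key z hz
  set Sv := ∑' m : ℤ, (J m) ^ ((1/6):ℝ) * ‖v m‖^2 with hSvdef
  set Sw := ∑' m : ℤ, (J m) ^ ((1/6):ℝ) * ‖w m‖^2 with hSwdef
  set Sz := ∑' m : ℤ, (J m) ^ ((1/6):ℝ) * ‖z m‖^2 with hSzdef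
  have hSv0 : 0 ≤ Sv := tsum_nonneg fun m => by positivity
  have hSw0 : 0 ≤ Sw := tsum_nonneg fun m => by positivity
  have hSz0 : 0 ≤ Sz := tsum_nonneg fun m => by positivity
  set A : ℤ → ℝ := fun j => (J j) ^ ((1/12):ℝ) * ‖v j‖ with hAdef
  set B : ℤ → ℝ := fun j => (J j) ^ ((1/12):ℝ) * ‖w j‖ with hBdef
  set Cz : ℤ → ℝ := fun j => (J j) ^ ((1/12):ℝ) * ‖z j‖ with hCdef
  have hA2 : ∀ j, A j ^ 2 = (J j) ^ ((1/6):ℝ) * ‖v j‖^2 := by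
    intro j; simp only [hAdef]; rw [mul_pow, sq_rpow]; norm_num
  have hB2 : ∀ j, B j ^ 2 = (J j) ^ ((1/6):ℝ) * ‖w j‖^2 := by
    intro j; simp only [hBdef]; rw [mul_pow, sq_rpow]; norm_num
  have hC2 : ∀ j, Cz j ^ 2 = (J j) ^ ((1/6):ℝ) * ‖z j‖^2 := by
    intro j; simp only [hCdef]; rw [mul_pow, sq_rpow]; norm_num
  have hA2s : Summable fun j => A j ^ 2 := (summable_congr hA2).2 hv6
  have hB2s : Summable fun j => B j ^ 2 := (summable_congr hB2).2 hw6
  have hC2s : Summable fun j => Cz j ^ 2 := (summable_congr hC2).2 hz6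
  set Y : ℤ × ℤ → ℝ := fun p => if min (J p.1) (J p.2) ≤ J (p.1 + p.2 - n)
      then ‖w (p.1 + p.2 - n)‖ * ((J p.1) ^ (-(1/12):ℝ) * (J p.2) ^ (-(1/12):ℝ)) else 0
    with hYdef
  set Y' : ℤ × ℤ → ℝ := fun p => if min (J p.1) (J p.2) ≤ J (p.1 + p.2 - n)
      then 0 else ‖z p.2‖ * ((J p.1) ^ (-(1/12):ℝ) * (J (p.1 + p.2 - n)) ^ (-(1/12):ℝ))
    with hY'def
  have hY0 : ∀ p, 0 ≤ Y p := by
    intro p; simp only [hYdef]; split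
    · positivity
    · exact le_refl 0
  have hY'0 : ∀ p, 0 ≤ Y' p := by
    intro p; simp only [hY'def]; split
    · exact le_refl 0
    · positivity
  set G₁ : ℤ × ℤ → ℝ := fun p => ‖w (p.1 + p.2 - n)‖^2 * h p.1 (p.1 + p.2 - n) with hG₁def
  set G₂ : ℤ × ℤ → ℝ := fun p => ‖w (p.1 + p.2 - n)‖^2 * h p.2 (p.1 + p.2 - n) with hG₂def
  set G₃ : ℤ × ℤ → ℝ := fun p => ‖z p.2‖^2 * h (p.1 + p.2 - n) p.2 with hG₃def
  have ψw := psi (b := fun m => ‖w m‖^2) (fun m => sq_nonneg _) hw6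
  have ψz := psi (b := fun m => ‖z m‖^2) (fun m => sq_nonneg _) hz6
  -- G₁ via eA
  have hG₁e : ∀ q : ℤ × ℤ, G₁ (eA n q) = ‖w q.1‖^2 * h q.2 q.1 := by
    intro q
    simp only [hG₁def, eA, Equiv.coe_fn_mk]
    rw [show q.2 + (q.1 - q.2 + n) - n = q.1 by ring]
  have hG₁s : Summable G₁ := (eA n).summable_iff.1 ((summable_congr hG₁e).2 ψw.1)
  have hG₁t : ∑' p, G₁ p ≤ 8 * Sw := by
    rw [← Equiv.tsum_eq (eA n) G₁]
    calc ∑' q, G₁ (eA n q) = ∑' q : ℤ × ℤ, ‖w q.1‖^2 * h q.2 q.1 := tsum_congr hG₁e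
      _ ≤ 8 * Sw := ψw.2
  -- G₂ via eB
  have hG₂e : ∀ q : ℤ × ℤ, G₂ (eB n q) = ‖w q.1‖^2 * h q.2 q.1 := by
    intro q
    simp only [hG₂def, eB, Equiv.coe_fn_mk]
    rw [show q.1 - q.2 + n + q.2 - n = q.1 by ring]
  have hG₂s : Summable G₂ := (eB n).summable_iff.1 ((summable_congr hG₂e).2 ψw.1)
  have hG₂t : ∑' p, G₂ p ≤ 8 * Sw := by
    rw [← Equiv.tsum_eq (eB n) G₂]
    calc ∑' q, G₂ (eB n q) = ∑' q : ℤ × ℤ, ‖w q.1‖^2 * h q.2 q.1 := tsum_congr hG₂e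
      _ ≤ 8 * Sw := ψw.2
  -- G₃ via eC
  have hG₃e : ∀ q : ℤ × ℤ, G₃ (eC n q) = ‖z q.1‖^2 * h q.2 q.1 := by
    intro q
    simp only [hG₃def, eC, Equiv.coe_fn_mk]
    rw [show q.2 - q.1 + n + q.1 - n = q.2 by ring]
  have hG₃s : Summable G₃ := (eC n).summable_iff.1 ((summable_congr hG₃e).2 ψz.1)
  have hG₃t : ∑' p, G₃ p ≤ 8 * Sz := by
    rw [← Equiv.tsum_eq (eC n) G₃]
    calc ∑' q, G₃ (eC n q) = ∑' q : ℤ × ℤ, ‖z q.1‖^2 * h q.2 q.1 := tsum_congr hG₃e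
      _ ≤ 8 * Sz := ψz.2
  -- pointwise bounds for Y, Y'
  have hYle : ∀ p, Y p ^ 2 ≤ G₁ p + G₂ p := by
    intro p
    simp only [hYdef, hG₁def, hG₂def]
    split
    case isTrue hc =>
      rw [mul_pow, mul_pow, sq_rpow, sq_rpow]
      rw [show (2 * -(1/12) : ℝ) = -(1/6) by norm_num]
      rcases le_total (J p.1) (J p.2) with hJ | hJ
      · have hc1 : J p.1 ≤ J (p.1 + p.2 - n) := (min_eq_left hJ) ▸ hc
        have hkey : (J p.1) ^ (-(1/6):ℝ) * (J p.2) ^ (-(1/6):ℝ) ≤ h p.1 (p.1 + p.2 - n) := by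
          unfold h; rw [if_pos hc1]; exact neg_mul_le hJ
        calc ‖w (p.1 + p.2 - n)‖^2 * ((J p.1) ^ (-(1/6):ℝ) * (J p.2) ^ (-(1/6):ℝ))
            ≤ ‖w (p.1 + p.2 - n)‖^2 * h p.1 (p.1 + p.2 - n) :=
              mul_le_mul_of_nonneg_left hkey (sq_nonneg _)
          _ ≤ _ := le_add_of_nonneg_right (mul_nonneg (sq_nonneg _) (h_nonneg _ _))
      · have hc2 : J p.2 ≤ J (p.1 + p.2 - n) := (min_eq_right hJ) ▸ hc
        have hkey : (J p.1) ^ (-(1/6):ℝ) * (J p.2) ^ (-(1/6):ℝ) ≤ h p.2 (p.1 + p.2 - n) := by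
          unfold h; rw [if_pos hc2, mul_comm]; exact neg_mul_le hJ
        calc ‖w (p.1 + p.2 - n)‖^2 * ((J p.1) ^ (-(1/6):ℝ) * (J p.2) ^ (-(1/6):ℝ))
            ≤ ‖w (p.1 + p.2 - n)‖^2 * h p.2 (p.1 + p.2 - n) :=
              mul_le_mul_of_nonneg_left hkey (sq_nonneg _)
          _ ≤ _ := le_add_of_nonneg_left (mul_nonneg (sq_nonneg _) (h_nonneg _ _))
    case isFalse hc =>
      simpa using add_nonneg (mul_nonneg (sq_nonneg _) (h_nonneg _ _))
        (mul_nonneg (sq_nonneg _) (h_nonneg _ _))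
  have hY'le : ∀ p, Y' p ^ 2 ≤ G₃ p := by
    intro p
    simp only [hY'def, hG₃def]
    split
    case isTrue hc => simpa using mul_nonneg (sq_nonneg (‖z p.2‖)) (h_nonneg (p.1 + p.2 - n) p.2)
    case isFalse hc =>
      rw [not_le] at hc
      have h1 : J (p.1 + p.2 - n) ≤ J p.1 := (lt_of_lt_of_le hc (min_le_left _ _)).le
      have h2 : J (p.1 + p.2 - n) ≤ J p.2 := (lt_of_lt_of_le hc (min_le_right _ _)).le
      rw [mul_pow, mul_pow, sq_rpow, sq_rpow]
      rw [show (2 * -(1/12) : ℝ) = -(1/6) by norm_num]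
      have hkey : (J p.1) ^ (-(1/6):ℝ) * (J (p.1 + p.2 - n)) ^ (-(1/6):ℝ)
          ≤ h (p.1 + p.2 - n) p.2 := by
        unfold h; rw [if_pos h2, mul_comm]; exact neg_mul_le h1
      exact mul_le_mul_of_nonneg_left hkey (sq_nonneg _)
  -- X parts
  have pm1 := prodMul (f := fun j => A j ^ 2) (g := fun j => Cz j ^ 2)
    (fun j => sq_nonneg _) (fun j => sq_nonneg _) hA2s hC2s
  have hXsq : Summable fun p : ℤ × ℤ => (A p.1 * Cz p.2) ^ 2 := by
    simpa [mul_pow] using pm1.1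
  have hXsqt : ∑' p : ℤ × ℤ, (A p.1 * Cz p.2) ^ 2 = Sv * Sz := by
    calc ∑' p : ℤ × ℤ, (A p.1 * Cz p.2) ^ 2
        = ∑' p : ℤ × ℤ, (A p.1) ^ 2 * (Cz p.2) ^ 2 := tsum_congr fun p => mul_pow _ _ _
      _ = (∑' j, A j ^ 2) * (∑' j, Cz j ^ 2) := pm1.2
      _ = Sv * Sz := by rw [tsum_congr hA2, tsum_congr hC2]
  have pm2 := prodMul (f := fun j => A j ^ 2) (g := fun j => B j ^ 2)
    (fun j => sq_nonneg _) (fun j => sq_nonneg _) hA2s hB2s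
  have hX'e : ∀ q : ℤ × ℤ, (A ((eX n q).1) * B ((eX n q).1 + (eX n q).2 - n)) ^ 2
      = (A q.1) ^ 2 * (B q.2) ^ 2 := by
    intro q
    simp only [eX, Equiv.coe_fn_mk]
    rw [show q.1 + (q.2 - q.1 + n) - n = q.2 by ring, mul_pow]
  have hX'sq : Summable fun p : ℤ × ℤ => (A p.1 * B (p.1 + p.2 - n)) ^ 2 :=
    (eX n).summable_iff.1 ((summable_congr hX'e).2 pm2.1)
  have hX'sqt : ∑' p : ℤ × ℤ, (A p.1 * B (p.1 + p.2 - n)) ^ 2 = Sv * Sw := by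
    rw [← Equiv.tsum_eq (eX n) (fun p : ℤ × ℤ => (A p.1 * B (p.1 + p.2 - n)) ^ 2)]
    calc ∑' q : ℤ × ℤ, (A ((eX n q).1) * B ((eX n q).1 + (eX n q).2 - n)) ^ 2
        = ∑' q : ℤ × ℤ, (A q.1) ^ 2 * (B q.2) ^ 2 := tsum_congr hX'e
      _ = (∑' j, A j ^ 2) * (∑' j, B j ^ 2) := pm2.2
      _ = Sv * Sw := by rw [tsum_congr hA2, tsum_congr hB2]
  -- Y summabilities and bounds
  have hYsq : Summable fun p => Y p ^ 2 :=
    Summable.of_nonneg_of_le (fun p => sq_nonneg _) hYle (hG₁s.add hG₂s)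
  have hYsqt : ∑' p, Y p ^ 2 ≤ 16 * Sw := by
    calc ∑' p, Y p ^ 2 ≤ ∑' p, (G₁ p + G₂ p) := Summable.tsum_le_tsum hYle hYsq (hG₁s.add hG₂s)
      _ = (∑' p, G₁ p) + ∑' p, G₂ p := Summable.tsum_add hG₁s hG₂s
      _ ≤ 16 * Sw := by linarith
  have hY'sq : Summable fun p => Y' p ^ 2 :=
    Summable.of_nonneg_of_le (fun p => sq_nonneg _) hY'le hG₃s
  have hY'sqt : ∑' p, Y' p ^ 2 ≤ 8 * Sz := by
    calc ∑' p, Y' p ^ 2 ≤ ∑' p, G₃ p := Summable.tsum_le_tsum hY'le hY'sq hG₃s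
      _ ≤ 8 * Sz := hG₃t
  -- Cauchy-Schwarz
  obtain ⟨hs1, hb1⟩ := cs (X := fun p : ℤ × ℤ => A p.1 * Cz p.2) (Y := Y)
    (fun p => mul_nonneg (by simp only [hAdef]; positivity) (by simp only [hCdef]; positivity))
    hY0 hXsq hYsq
  obtain ⟨hs2, hb2⟩ := cs (X := fun p : ℤ × ℤ => A p.1 * B (p.1 + p.2 - n)) (Y := Y')
    (fun p => mul_nonneg (by simp only [hAdef]; positivity) (by simp only [hBdef]; positivity))
    hY'0 hX'sq hY'sq
  -- decomposition
  have hFdecomp : ∀ p : ℤ × ℤ, ‖v p.1‖ * ‖w (p.1 + p.2 - n)‖ * ‖z p.2‖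
      = (A p.1 * Cz p.2) * Y p + (A p.1 * B (p.1 + p.2 - n)) * Y' p := by
    intro p
    by_cases hc : min (J p.1) (J p.2) ≤ J (p.1 + p.2 - n)
    · simp only [hYdef, hY'def, if_pos hc, mul_zero, add_zero, hAdef, hBdef, hCdef]
      rw [mul_cancel₃ p.1 p.2]
    · simp only [hYdef, hY'def, if_neg hc, mul_zero, zero_add, hAdef, hBdef, hCdef]
      rw [mul_cancel₃ p.1 (p.1 + p.2 - n)]
      ring
  have hFs : Summable (fun p : ℤ × ℤ => ‖v p.1‖ * ‖w (p.1 + p.2 - n)‖ * ‖z p.2‖) :=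
    (summable_congr hFdecomp).2 (hs1.add hs2)
  refine ⟨hFs, ?_⟩
  have hnormv : sobolevNorm (1/6) v = √Sv := rfl
  have hnormw : sobolevNorm (1/6) w = √Sw := rfl
  have hnormz : sobolevNorm (1/6) z = √Sz := rfl
  have sqrt16 : √((16:ℝ) * Sw) = 4 * √Sw := by
    rw [Real.sqrt_mul (by norm_num : (0:ℝ) ≤ 16), show (16:ℝ) = 4^2 by norm_num,
      Real.sqrt_sq (by norm_num : (0:ℝ) ≤ 4)]
  have sqrt8 : √((8:ℝ) * Sz) ≤ 3 * √Sz := by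
    calc √((8:ℝ) * Sz) ≤ √((9:ℝ) * Sz) := Real.sqrt_le_sqrt (by linarith)
      _ = 3 * √Sz := by
          rw [Real.sqrt_mul (by norm_num : (0:ℝ) ≤ 9), show (9:ℝ) = 3^2 by norm_num,
            Real.sqrt_sq (by norm_num : (0:ℝ) ≤ 3)]
  have hbound1 : ∑' p : ℤ × ℤ, (A p.1 * Cz p.2) * Y p ≤ 4 * (√Sv * √Sw * √Sz) := by
    calc ∑' p : ℤ × ℤ, (A p.1 * Cz p.2) * Y p
        ≤ √(∑' p : ℤ × ℤ, (A p.1 * Cz p.2) ^ 2) * √(∑' p, Y p ^ 2) := hb1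
      _ ≤ √(Sv * Sz) * √(16 * Sw) := by
          apply mul_le_mul (le_of_eq (by rw [hXsqt])) (Real.sqrt_le_sqrt hYsqt)
            (Real.sqrt_nonneg _) (Real.sqrt_nonneg _)
      _ = 4 * (√Sv * √Sw * √Sz) := by
          rw [Real.sqrt_mul hSv0, sqrt16]; ring
  have hbound2 : ∑' p : ℤ × ℤ, (A p.1 * B (p.1 + p.2 - n)) * Y' p ≤ 3 * (√Sv * √Sw * √Sz) := by
    calc ∑' p : ℤ × ℤ, (A p.1 * B (p.1 + p.2 - n)) * Y' p
        ≤ √(∑' p : ℤ × ℤ, (A p.1 * B (p.1 + p.2 - n)) ^ 2) * √(∑' p, Y' p ^ 2) := hb2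
      _ ≤ √(Sv * Sw) * √(8 * Sz) := by
          apply mul_le_mul (le_of_eq (by rw [hX'sqt])) (Real.sqrt_le_sqrt hY'sqt)
            (Real.sqrt_nonneg _) (Real.sqrt_nonneg _)
      _ ≤ √(Sv * Sw) * (3 * √Sz) :=
          mul_le_mul_of_nonneg_left sqrt8 (Real.sqrt_nonneg _)
      _ = 3 * (√Sv * √Sw * √Sz) := by rw [Real.sqrt_mul hSv0]; ring
  calc ∑' p : ℤ × ℤ, ‖v p.1‖ * ‖w (p.1 + p.2 - n)‖ * ‖z p.2‖
      = (∑' p : ℤ × ℤ, (A p.1 * Cz p.2) * Y p)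
        + ∑' p : ℤ × ℤ, (A p.1 * B (p.1 + p.2 - n)) * Y' p := by
        rw [tsum_congr hFdecomp, Summable.tsum_add hs1 hs2]
    _ ≤ 4 * (√Sv * √Sw * √Sz) + 3 * (√Sv * √Sw * √Sz) := add_le_add hbound1 hbound2
    _ = 7 * sobolevNorm (1/6) v * sobolevNorm (1/6) w * sobolevNorm (1/6) z := by
        rw [hnormv, hnormw, hnormz]; ring
end

section
/- Let s > 1/2 and define, for sequences v ∈ H^s, the trilinear operator N_0(v)_n = Σ_{(n1,n2,n3) ∈ Γ(n)} φ(n̄)^{-1} v_{n1} \overline{v_{n2}} v_{n3}, where Γ(n) = {(n1,n2,n3) : n = n1-n2+n3, n1 ≠ n, n3 ≠ n} and φ(n̄) = n1^4 - n2^4 + n3^4 - n^4. Then ‖N_0(v)‖_{H^{s+2}} ≤ C ‖v‖_{H^s}^3. -/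
open scoped ENNReal



-- integer lower bound on the phase
lemma phi_lb (n n1 n3 : ℤ) (h1 : n1 ≠ n) (h3 : n3 ≠ n) :
    n ^ 2 + 1 ≤ 2 * |n1 ^ 4 - (n1 + n3 - n) ^ 4 + n3 ^ 4 - n ^ 4| := by
  set a : ℤ := n1 - n with ha
  set b : ℤ := n3 - n with hb
  have ha0 : a ≠ 0 := sub_ne_zero.mpr h1
  have hb0 : b ≠ 0 := sub_ne_zero.mpr h3
  set Q : ℤ := 6 * n ^ 2 + 6 * n * (a + b) + 2 * a ^ 2 + 3 * a * b + 2 * b ^ 2 with hQ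
  have hfac : n1 ^ 4 - (n1 + n3 - n) ^ 4 + n3 ^ 4 - n ^ 4 = -2 * a * b * Q := by
    simp only [hQ, ha, hb]; ring
  have ha1 : 1 ≤ |a| := Int.one_le_abs ha0
  have hb1 : 1 ≤ |b| := Int.one_le_abs hb0
  have ha2 : 1 ≤ a ^ 2 := by nlinarith [sq_abs a]
  have hb2 : 1 ≤ b ^ 2 := by nlinarith [sq_abs b]
  have hQ4 : n ^ 2 + a ^ 2 + b ^ 2 ≤ 4 * Q := by
    nlinarith [sq_nonneg (a - b), sq_nonneg (46 * n + 24 * (a + b)), sq_nonneg (a + b), sq_nonneg n]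
  have hQpos : 0 < Q := by nlinarith
  have habs : |n1 ^ 4 - (n1 + n3 - n) ^ 4 + n3 ^ 4 - n ^ 4| = 2 * |a| * |b| * Q := by
    rw [hfac]
    rw [show (-2 : ℤ) * a * b * Q = -(2 * a * b * Q) by ring, abs_neg]
    rw [abs_mul, abs_mul, abs_mul, abs_of_nonneg (by norm_num : (0:ℤ) ≤ 2),
      abs_of_pos hQpos]
  rw [habs]
  nlinarith [hQ4, hQpos, ha1, hb1, mul_le_mul ha1 hb1 (by norm_num) (abs_nonneg a)]


-- Cauchy-Schwarz for ENNReal tsums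
lemma enn_cs {ι : Type*} (f g : ι → ℝ≥0∞) :
    ∑' i, f i * g i ≤ (∑' i, f i ^ 2) ^ (1/2 : ℝ) * (∑' i, g i ^ 2) ^ (1/2 : ℝ) := by
  rw [ENNReal.tsum_eq_iSup_sum]
  refine iSup_le fun t => ?_
  have hpq : Real.HolderConjugate 2 2 := Real.holderConjugate_iff.mpr ⟨one_lt_two, by norm_num⟩
  calc ∑ i ∈ t, f i * g i
      ≤ (∑ i ∈ t, f i ^ (2:ℝ)) ^ (1/2 : ℝ) * (∑ i ∈ t, g i ^ (2:ℝ)) ^ (1/2 : ℝ) :=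
        ENNReal.inner_le_Lp_mul_Lq t f g hpq
    _ ≤ (∑' i, f i ^ 2) ^ (1/2 : ℝ) * (∑' i, g i ^ 2) ^ (1/2 : ℝ) := by
        gcongr
        · simp only [← ENNReal.rpow_natCast _ 2]
          exact_mod_cast ENNReal.sum_le_tsum t
        · simp only [← ENNReal.rpow_natCast _ 2]
          exact_mod_cast ENNReal.sum_le_tsum t
lemma sqrt_sq_enn (x : ℝ≥0∞) : (x ^ (1/2 : ℝ)) ^ 2 = x := by
  rw [← ENNReal.rpow_natCast (x ^ (1/2:ℝ)) 2, ← ENNReal.rpow_mul]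
  norm_num

-- key ℓ² bound: weighted sums of translates
lemma lemL {ι : Type*} (f : ι → ℝ≥0∞) (U : ℤ → ℝ≥0∞) (σ : ι → ℤ ≃ ℤ) :
    ∑' n : ℤ, (∑' i, f i * U (σ i n)) ^ 2 ≤ (∑' i, f i) ^ 2 * ∑' m, U m ^ 2 := by
  have key : ∀ n : ℤ, (∑' i, f i * U (σ i n)) ^ 2
      ≤ (∑' i, f i) * ∑' i, f i * U (σ i n) ^ 2 := by
    intro n
    have h := enn_cs (fun i => f i ^ (1/2 : ℝ)) (fun i => f i ^ (1/2 : ℝ) * U (σ i n))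
    have e1 : ∀ i, f i ^ (1/2:ℝ) * (f i ^ (1/2:ℝ) * U (σ i n)) = f i * U (σ i n) := by
      intro i
      rw [← mul_assoc, ← sq, sqrt_sq_enn]
    have e2 : ∀ i, (f i ^ (1/2:ℝ)) ^ 2 = f i := fun i => sqrt_sq_enn _
    have e3 : ∀ i, (f i ^ (1/2:ℝ) * U (σ i n)) ^ 2 = f i * U (σ i n) ^ 2 := by
      intro i; rw [mul_pow, sqrt_sq_enn]
    simp only [e1, e2, e3] at h
    calc (∑' i, f i * U (σ i n)) ^ 2
        ≤ ((∑' i, f i) ^ (1/2:ℝ) * (∑' i, f i * U (σ i n) ^ 2) ^ (1/2:ℝ)) ^ 2 := by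
          gcongr
      _ = (∑' i, f i) * ∑' i, f i * U (σ i n) ^ 2 := by
          rw [mul_pow, sqrt_sq_enn, sqrt_sq_enn]
  calc ∑' n : ℤ, (∑' i, f i * U (σ i n)) ^ 2
      ≤ ∑' n : ℤ, (∑' i, f i) * ∑' i, f i * U (σ i n) ^ 2 := ENNReal.tsum_le_tsum key
    _ = (∑' i, f i) * ∑' n : ℤ, ∑' i, f i * U (σ i n) ^ 2 := ENNReal.tsum_mul_left
    _ = (∑' i, f i) * ∑' i, ∑' n : ℤ, f i * U (σ i n) ^ 2 := by rw [ENNReal.tsum_comm]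
    _ = (∑' i, f i) * ∑' i, f i * ∑' n : ℤ, U (σ i n) ^ 2 := by
        congr 1; exact tsum_congr fun i => ENNReal.tsum_mul_left
    _ = (∑' i, f i) * ∑' i, f i * ∑' m, U m ^ 2 := by
        congr 1; exact tsum_congr fun i => by rw [(σ i).tsum_eq (fun m => U m ^ 2)]
    _ = (∑' i, f i) ^ 2 * ∑' m, U m ^ 2 := by
        rw [ENNReal.tsum_mul_right, sq]; ring


lemma enn_norm_tsum_le {ι : Type*} (g : ι → ℂ) :
    ENNReal.ofReal ‖∑' i, g i‖ ≤ ∑' i, ENNReal.ofReal ‖g i‖ := by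
  by_cases h : Summable fun i => ‖g i‖
  · rw [← ENNReal.ofReal_tsum_of_nonneg (fun i => norm_nonneg _) h]
    exact ENNReal.ofReal_le_ofReal (norm_tsum_le_tsum_norm h)
  · have : ∑' i, ENNReal.ofReal ‖g i‖ = ⊤ := by
      by_contra hne
      exact h (by
        have := ENNReal.summable_toReal hne
        simpa [ENNReal.toReal_ofReal (norm_nonneg _)] using this)
    rw [this]; exact le_top

lemma K_summable {s : ℝ} (hs : 1/2 < s) :
    Summable fun m : ℤ => (1 + (m:ℝ) ^ 2) ^ (-s) := by
  have h2s : (1:ℝ) < 2 * s := by linarith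
  have hsum0 : Summable fun m : ℤ => |(m:ℝ)| ^ (-(2*s)) := Real.summable_abs_int_rpow h2s
  have hind : Summable fun m : ℤ => if m = 0 then (1:ℝ) else 0 := by
    apply summable_of_ne_finset_zero (s := {0})
    intro m hm
    simp only [Finset.mem_singleton] at hm
    simp [hm]
  refine Summable.of_nonneg_of_le (fun m => Real.rpow_nonneg (by positivity) _)
    (fun m => ?_) (hsum0.add hind)
  by_cases hm : m = 0
  · subst hm
    simp [Real.zero_rpow (by intro h; nlinarith : -(2*s) ≠ 0)]
  · have hm1 : (1:ℝ) ≤ |(m:ℝ)| := by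
      rw [← Int.cast_abs]
      exact_mod_cast Int.one_le_abs hm
    have h1 : (|(m:ℝ)| ^ (2:ℕ) : ℝ) ≤ 1 + (m:ℝ)^2 := by
      rw [sq_abs]; nlinarith
    have h2 : (1 + (m:ℝ)^2) ^ (-s) ≤ (|(m:ℝ)| ^ (2:ℕ)) ^ (-s) := by
      apply Real.rpow_le_rpow_of_nonpos (by positivity) h1 (by linarith)
    refine h2.trans ?_
    rw [← Real.rpow_natCast |(m:ℝ)| 2, ← Real.rpow_mul (abs_nonneg _)]
    simp only [if_neg hm, add_zero]
    norm_num
lemma wt_ineq {s : ℝ} (hs : 0 ≤ s) (n n1 n3 : ℤ) (h1 : n1 ≠ n) (h3 : n3 ≠ n) :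
    (1 + (n:ℝ) ^ 2) ^ ((s+2)/2) * |((n1 ^ 4 - (n1 + n3 - n) ^ 4 + n3 ^ 4 - n ^ 4 : ℤ) : ℝ)|⁻¹
      ≤ 2 * 3 ^ s * ((1 + (n1:ℝ) ^ 2) ^ (s/2)
          + (1 + ((n1:ℝ) + (n3:ℝ) - (n:ℝ)) ^ 2) ^ (s/2) + (1 + (n3:ℝ) ^ 2) ^ (s/2)) := by
  set x : ℝ := (n : ℝ)
  set x1 : ℝ := (n1 : ℝ)
  set x3 : ℝ := (n3 : ℝ)
  set x2 : ℝ := x1 + x3 - x with hx2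
  set φr : ℝ := |((n1 ^ 4 - (n1 + n3 - n) ^ 4 + n3 ^ 4 - n ^ 4 : ℤ) : ℝ)| with hφr
  have hφ : 1 + x ^ 2 ≤ 2 * φr := by
    have := phi_lb n n1 n3 h1 h3
    have h2 : ((n ^ 2 + 1 : ℤ) : ℝ) ≤ ((2 * |n1 ^ 4 - (n1 + n3 - n) ^ 4 + n3 ^ 4 - n ^ 4| : ℤ) : ℝ) := by
      exact_mod_cast this
    rw [hφr]
    push_cast at h2 ⊢
    linarith
  have hx : (0:ℝ) < 1 + x ^ 2 := by positivity
  have hφpos : 0 < φr := by linarith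
  have hA : 0 ≤ (1 + x1 ^ 2) ^ (s/2) := Real.rpow_nonneg (by positivity) _
  have hB : 0 ≤ (1 + x2 ^ 2) ^ (s/2) := Real.rpow_nonneg (by positivity) _
  have hC : 0 ≤ (1 + x3 ^ 2) ^ (s/2) := Real.rpow_nonneg (by positivity) _
  have hmax : 1 + x ^ 2 ≤ 9 * (1 + max (x1 ^ 2) (max (x2 ^ 2) (x3 ^ 2))) := by
    have m1 : x1 ^ 2 ≤ max (x1 ^ 2) (max (x2 ^ 2) (x3 ^ 2)) := le_max_left _ _
    have m2 : x2 ^ 2 ≤ max (x1 ^ 2) (max (x2 ^ 2) (x3 ^ 2)) :=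
      le_trans (le_max_left _ _) (le_max_right _ _)
    have m3 : x3 ^ 2 ≤ max (x1 ^ 2) (max (x2 ^ 2) (x3 ^ 2)) :=
      le_trans (le_max_right _ _) (le_max_right _ _)
    have hid : x ^ 2 = (x1 - x2 + x3) ^ 2 := by rw [hx2]; ring
    nlinarith [m1, m2, m3, hid, sq_nonneg (x1 + x2), sq_nonneg (x2 + x3), sq_nonneg (x1 - x3)]
  have hstep1 : (1 + x ^ 2) ^ (s/2)
      ≤ 3 ^ s * ((1 + x1 ^ 2) ^ (s/2) + (1 + x2 ^ 2) ^ (s/2) + (1 + x3 ^ 2) ^ (s/2)) := by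
    have h9 : (1 + x ^ 2) ^ (s/2) ≤ (9 * (1 + max (x1 ^ 2) (max (x2 ^ 2) (x3 ^ 2)))) ^ (s/2) :=
      Real.rpow_le_rpow (by positivity) hmax (by linarith)
    have h9' : (9 * (1 + max (x1 ^ 2) (max (x2 ^ 2) (x3 ^ 2)))) ^ (s/2)
        = 3 ^ s * (1 + max (x1 ^ 2) (max (x2 ^ 2) (x3 ^ 2))) ^ (s/2) := by
      rw [Real.mul_rpow (by norm_num) (by positivity)]
      congr 1
      rw [show (9:ℝ) = 3 ^ (2:ℕ) by norm_num, ← Real.rpow_natCast 3 2,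
        ← Real.rpow_mul (by norm_num)]
      norm_num
      rw [show 2 * (s/2) = s by ring]
    have hM : (1 + max (x1 ^ 2) (max (x2 ^ 2) (x3 ^ 2))) ^ (s/2)
        ≤ (1 + x1 ^ 2) ^ (s/2) + (1 + x2 ^ 2) ^ (s/2) + (1 + x3 ^ 2) ^ (s/2) := by
      rcases max_choice (x1 ^ 2) (max (x2 ^ 2) (x3 ^ 2)) with h' | h'
      · rw [h']; linarith
      · rw [h']
        rcases max_choice (x2 ^ 2) (x3 ^ 2) with h | h <;> rw [h] <;> linarith
    calc (1 + x ^ 2) ^ (s/2) ≤ _ := h9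
      _ = _ := h9'
      _ ≤ _ := by
        have h3s : (0:ℝ) ≤ 3 ^ s := Real.rpow_nonneg (by norm_num) _
        exact mul_le_mul_of_nonneg_left hM h3s
  have hsplit : (1 + x ^ 2) ^ ((s+2)/2) = (1 + x ^ 2) ^ (s/2) * (1 + x ^ 2) := by
    rw [show (s+2)/2 = s/2 + 1 by ring, Real.rpow_add hx, Real.rpow_one]
  have hquot : (1 + x ^ 2) * φr⁻¹ ≤ 2 := by
    rw [← div_eq_mul_inv, div_le_iff₀ hφpos]; linarith
  calc (1 + x ^ 2) ^ ((s+2)/2) * φr⁻¹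
      = (1 + x ^ 2) ^ (s/2) * ((1 + x ^ 2) * φr⁻¹) := by rw [hsplit]; ring
    _ ≤ (3 ^ s * ((1 + x1 ^ 2) ^ (s/2) + (1 + x2 ^ 2) ^ (s/2) + (1 + x3 ^ 2) ^ (s/2))) * 2 := by
        apply mul_le_mul hstep1 hquot (by positivity) (by positivity)
    _ = 2 * 3 ^ s * ((1 + x1 ^ 2) ^ (s/2) + (1 + x2 ^ 2) ^ (s/2) + (1 + x3 ^ 2) ^ (s/2)) := by
        ring

/- ----- auxiliary equivs ----- -/

def trEquiv (a : ℤ) : ℤ ≃ ℤ :=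
  ⟨fun n => a + n, fun n => n - a, fun n => by simp, fun n => by simp⟩

def reflEquiv (a : ℤ) : ℤ ≃ ℤ :=
  ⟨fun n => a - n, fun n => a - n, fun n => by simp, fun n => by simp⟩

@[simp] lemma trEquiv_apply (a n : ℤ) : trEquiv a n = a + n := rfl
@[simp] lemma reflEquiv_apply (a n : ℤ) : reflEquiv a n = a - n := rfl

def sigma3 (x : Fin 3 × ℤ × ℤ) : ℤ ≃ ℤ :=
  if x.1 = 1 then reflEquiv (x.2.1 + x.2.2) else trEquiv (x.2.1 - x.2.2)

@[simp] lemma sigma3_zero (q : ℤ × ℤ) : sigma3 (0, q) = trEquiv (q.1 - q.2) := by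
  simp [sigma3, show (0 : Fin 3) ≠ 1 by decide]

@[simp] lemma sigma3_one (q : ℤ × ℤ) : sigma3 (1, q) = reflEquiv (q.1 + q.2) := by
  simp [sigma3]

@[simp] lemma sigma3_two (q : ℤ × ℤ) : sigma3 (2, q) = trEquiv (q.1 - q.2) := by
  simp [sigma3, show (2 : Fin 3) ≠ 1 by decide]

def shearA (n : ℤ) : ℤ × ℤ ≃ ℤ × ℤ :=
  ⟨fun p => (p.1 + p.2 - n, p.2), fun q => (q.1 - q.2 + n, q.2),
    fun p => by simp [Prod.ext_iff]; omega, fun q => by simp [Prod.ext_iff]; omega⟩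

def shearC (n : ℤ) : ℤ × ℤ ≃ ℤ × ℤ :=
  ⟨fun p => (p.1 + p.2 - n, p.1), fun q => (q.2, q.1 - q.2 + n),
    fun p => by simp [Prod.ext_iff]; omega, fun q => by simp [Prod.ext_iff]; omega⟩

@[simp] lemma shearA_apply (n : ℤ) (p : ℤ × ℤ) : shearA n p = (p.1 + p.2 - n, p.2) := rfl
@[simp] lemma shearC_apply (n : ℤ) (p : ℤ × ℤ) : shearC n p = (p.1 + p.2 - n, p.1) := rfl

noncomputable def Wf (v : ℤ → ℂ) : ℤ → ℝ≥0∞ := fun m => ENNReal.ofReal ‖v m‖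

noncomputable def Uf (s : ℝ) (v : ℤ → ℂ) : ℤ → ℝ≥0∞ :=
  fun m => ENNReal.ofReal ((1 + (m:ℝ)^2) ^ (s/2)) * Wf v m

noncomputable def Gf (s : ℝ) (v : ℤ → ℂ) : ℤ → ℝ≥0∞ :=
  fun n => ∑' x : Fin 3 × ℤ × ℤ, (Wf v x.2.1 * Wf v x.2.2) * Uf s v (sigma3 x n)

lemma hhalf (t x : ℝ) (hx : 0 ≤ x) : (x ^ (t/2)) ^ 2 = x ^ t := by
  rw [← Real.rpow_natCast (x ^ (t/2)) 2, ← Real.rpow_mul hx,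
    show t / 2 * ((2:ℕ):ℝ) = t by push_cast; ring]

lemma step_hXY (s : ℝ) (v : ℤ → ℂ) (hv : Summable (fun m : ℤ => ((1 + (m : ℝ)^2) ^ s) * ‖v m‖^2)) :
    ∑' m : ℤ, Uf s v m ^ 2 = ENNReal.ofReal (∑' m : ℤ, ((1 + (m : ℝ)^2) ^ s) * ‖v m‖^2) := by
  rw [ENNReal.ofReal_tsum_of_nonneg (fun m => by positivity) hv]
  refine tsum_congr fun m => ?_
  have hpos : (0:ℝ) ≤ 1 + (m:ℝ)^2 := by positivity
  have e : (1 + (m:ℝ)^2) ^ s * ‖v m‖^2 = ((1 + (m:ℝ)^2) ^ (s/2) * ‖v m‖)^2 := by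
    rw [mul_pow, hhalf s _ hpos]
  rw [e, ENNReal.ofReal_pow (by positivity), ENNReal.ofReal_mul (by positivity)]
  rfl
lemma step_l2 (s : ℝ) (v : ℤ → ℂ) :
    ∑' n : ℤ, Gf s v n ^ 2
      ≤ (3 * (∑' m : ℤ, Wf v m) ^ 2) ^ 2 * ∑' m : ℤ, Uf s v m ^ 2 := by
  have hL := lemL (fun x : Fin 3 × ℤ × ℤ => Wf v x.2.1 * Wf v x.2.2) (Uf s v) sigma3
  have hf : ∑' x : Fin 3 × ℤ × ℤ, Wf v x.2.1 * Wf v x.2.2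
      = 3 * (∑' m : ℤ, Wf v m) ^ 2 := by
    rw [ENNReal.tsum_prod']
    rw [tsum_fintype]
    rw [Fin.sum_univ_three]
    have hq : ∑' q : ℤ × ℤ, Wf v q.1 * Wf v q.2 = (∑' m : ℤ, Wf v m) ^ 2 := by
      rw [ENNReal.tsum_prod']
      have : ∀ a : ℤ, ∑' b : ℤ, Wf v a * Wf v b = Wf v a * ∑' m, Wf v m :=
        fun a => ENNReal.tsum_mul_left
      rw [tsum_congr this, ENNReal.tsum_mul_right, sq]
    simp only []
    rw [hq]
    ring
  calc ∑' n : ℤ, Gf s v n ^ 2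
      ≤ (∑' x : Fin 3 × ℤ × ℤ, Wf v x.2.1 * Wf v x.2.2) ^ 2 * ∑' m : ℤ, Uf s v m ^ 2 := hL
    _ = (3 * (∑' m : ℤ, Wf v m) ^ 2) ^ 2 * ∑' m : ℤ, Uf s v m ^ 2 := by rw [hf]

lemma step_l1 {s : ℝ} (hs : 1/2 < s) (v : ℤ → ℂ) :
    ∑' m : ℤ, Wf v m
      ≤ (ENNReal.ofReal (∑' m : ℤ, (1 + (m:ℝ)^2) ^ (-s))) ^ (1/2:ℝ)
        * (∑' m : ℤ, Uf s v m ^ 2) ^ (1/2:ℝ) := by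
  have hcs := enn_cs (fun m : ℤ => ENNReal.ofReal ((1 + (m:ℝ)^2) ^ (-(s/2)))) (Uf s v)
  have hW : ∀ m : ℤ, ENNReal.ofReal ((1 + (m:ℝ)^2) ^ (-(s/2))) * Uf s v m = Wf v m := by
    intro m
    have hpos : (0:ℝ) < 1 + (m:ℝ)^2 := by positivity
    rw [Uf, ← mul_assoc, ← ENNReal.ofReal_mul (by positivity),
      ← Real.rpow_add hpos, neg_add_cancel, Real.rpow_zero, ENNReal.ofReal_one, one_mul]
  have hK : ∑' m : ℤ, ENNReal.ofReal ((1 + (m:ℝ)^2) ^ (-(s/2))) ^ 2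
      = ENNReal.ofReal (∑' m : ℤ, (1 + (m:ℝ)^2) ^ (-s)) := by
    rw [ENNReal.ofReal_tsum_of_nonneg (fun m => Real.rpow_nonneg (by positivity) _)
      (K_summable hs)]
    refine tsum_congr fun m => ?_
    rw [← ENNReal.ofReal_pow (Real.rpow_nonneg (by positivity) _)]
    congr 1
    have h := hhalf (-s) (1 + (m:ℝ)^2) (by positivity)
    rw [show -s/2 = -(s/2) by ring] at h
    exact h
  calc ∑' m : ℤ, Wf v m
      = ∑' m : ℤ, ENNReal.ofReal ((1 + (m:ℝ)^2) ^ (-(s/2))) * Uf s v m := by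
        exact (tsum_congr hW).symm
    _ ≤ _ := hcs
    _ = _ := by rw [hK]
lemma UWW (s : ℝ) (v : ℤ → ℂ) (a b c : ℤ) :
    Uf s v a * Wf v b * Wf v c
      = ENNReal.ofReal ((1 + (a:ℝ)^2)^(s/2) * ‖v a‖ * ‖v b‖ * ‖v c‖) := by
  simp only [Uf, Wf]
  rw [← ENNReal.ofReal_mul (by positivity), ← ENNReal.ofReal_mul (by positivity),
    ← ENNReal.ofReal_mul (by positivity)]

lemma WUW (s : ℝ) (v : ℤ → ℂ) (a b c : ℤ) :
    Wf v a * Uf s v b * Wf v c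
      = ENNReal.ofReal (‖v a‖ * ((1 + (b:ℝ)^2)^(s/2) * ‖v b‖) * ‖v c‖) := by
  simp only [Uf, Wf]
  rw [← ENNReal.ofReal_mul (by positivity), ← ENNReal.ofReal_mul (by positivity),
    ← ENNReal.ofReal_mul (by positivity)]

lemma WWU (s : ℝ) (v : ℤ → ℂ) (a b c : ℤ) :
    Wf v a * Wf v b * Uf s v c
      = ENNReal.ofReal (‖v a‖ * ‖v b‖ * ((1 + (c:ℝ)^2)^(s/2) * ‖v c‖)) := by
  simp only [Uf, Wf]
  rw [← ENNReal.ofReal_mul (by positivity), ← ENNReal.ofReal_mul (by positivity),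
    ← ENNReal.ofReal_mul (by positivity)]

lemma Gf_eq (s : ℝ) (v : ℤ → ℂ) (n : ℤ) :
    ∑' p : ℤ × ℤ, ((Uf s v p.1 * Wf v (p.1 + p.2 - n) * Wf v p.2)
        + (Wf v p.1 * Uf s v (p.1 + p.2 - n) * Wf v p.2)
        + (Wf v p.1 * Wf v (p.1 + p.2 - n) * Uf s v p.2)) = Gf s v n := by
  have hG : Gf s v n
      = (∑' q : ℤ × ℤ, (Wf v q.1 * Wf v q.2) * Uf s v (q.1 - q.2 + n))
        + (∑' q : ℤ × ℤ, (Wf v q.1 * Wf v q.2) * Uf s v (q.1 + q.2 - n))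
        + (∑' q : ℤ × ℤ, (Wf v q.1 * Wf v q.2) * Uf s v (q.1 - q.2 + n)) := by
    rw [Gf, ENNReal.tsum_prod', tsum_fintype, Fin.sum_univ_three]
    simp only [sigma3_zero, sigma3_one, sigma3_two, trEquiv_apply, reflEquiv_apply]
  rw [ENNReal.tsum_add, ENNReal.tsum_add, hG]
  congr 1
  · congr 1
    · have h := (shearA n).tsum_eq
        (fun q : ℤ × ℤ => (Wf v q.1 * Wf v q.2) * Uf s v (q.1 - q.2 + n))
      rw [← h]
      refine tsum_congr fun p => ?_
      simp only [shearA_apply]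
      rw [show p.1 + p.2 - n - p.2 + n = p.1 by ring]
      ring
    · refine tsum_congr fun p => ?_
      ring
  · have h := (shearC n).tsum_eq
      (fun q : ℤ × ℤ => (Wf v q.1 * Wf v q.2) * Uf s v (q.1 - q.2 + n))
    rw [← h]
    refine tsum_congr fun p => ?_
    simp only [shearC_apply]
    rw [show p.1 + p.2 - n - p.1 + n = p.2 by ring]
    ring
lemma hterm_bound {s : ℝ} (hs : 1/2 < s) (v : ℤ → ℂ) (n : ℤ) (p : ℤ × ℤ) :
    ENNReal.ofReal ((1 + (n:ℝ)^2) ^ ((s+2)/2))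
      * ENNReal.ofReal ‖(if p.1 ≠ n ∧ p.2 ≠ n then
          (((p.1^4 - (p.1 + p.2 - n)^4 + p.2^4 - n^4 : ℤ) : ℂ))⁻¹ *
            (v p.1 * (starRingEnd ℂ) (v (p.1 + p.2 - n)) * v p.2) else 0)‖
      ≤ ENNReal.ofReal (2 * 3 ^ s)
        * ((Uf s v p.1 * Wf v (p.1 + p.2 - n) * Wf v p.2)
          + (Wf v p.1 * Uf s v (p.1 + p.2 - n) * Wf v p.2)
          + (Wf v p.1 * Wf v (p.1 + p.2 - n) * Uf s v p.2)) := by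
  have hs0 : (0:ℝ) ≤ s := by linarith
  by_cases hp : p.1 ≠ n ∧ p.2 ≠ n
  · rw [if_pos hp]
    have hc : ‖(((p.1^4 - (p.1 + p.2 - n)^4 + p.2^4 - n^4 : ℤ) : ℂ))‖
        = |((p.1^4 - (p.1 + p.2 - n)^4 + p.2^4 - n^4 : ℤ) : ℝ)| := Complex.norm_intCast _
    have hnorm : ‖(((p.1^4 - (p.1 + p.2 - n)^4 + p.2^4 - n^4 : ℤ) : ℂ))⁻¹ *
        (v p.1 * (starRingEnd ℂ) (v (p.1 + p.2 - n)) * v p.2)‖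
        = |((p.1^4 - (p.1 + p.2 - n)^4 + p.2^4 - n^4 : ℤ) : ℝ)|⁻¹ *
          (‖v p.1‖ * ‖v (p.1 + p.2 - n)‖ * ‖v p.2‖) := by
      rw [norm_mul, norm_inv, hc, norm_mul, norm_mul, RCLike.norm_conj]
    rw [hnorm]
    have hw := wt_ineq hs0 n p.1 p.2 hp.1 hp.2
    have hcast : ((p.1:ℝ) + (p.2:ℝ) - (n:ℝ)) = ((p.1 + p.2 - n : ℤ) : ℝ) := by push_cast; ring
    rw [hcast] at hw
    have hkey : (1 + (n:ℝ)^2) ^ ((s+2)/2)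
          * (|((p.1^4 - (p.1 + p.2 - n)^4 + p.2^4 - n^4 : ℤ) : ℝ)|⁻¹ *
            (‖v p.1‖ * ‖v (p.1 + p.2 - n)‖ * ‖v p.2‖))
        ≤ (2 * 3 ^ s) * ((1 + (p.1:ℝ)^2)^(s/2) * ‖v p.1‖ * ‖v (p.1 + p.2 - n)‖ * ‖v p.2‖
            + ‖v p.1‖ * ((1 + ((p.1 + p.2 - n : ℤ):ℝ)^2)^(s/2) * ‖v (p.1 + p.2 - n)‖) * ‖v p.2‖
            + ‖v p.1‖ * ‖v (p.1 + p.2 - n)‖ * ((1 + (p.2:ℝ)^2)^(s/2) * ‖v p.2‖)) := by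
      calc (1 + (n:ℝ)^2) ^ ((s+2)/2)
            * (|((p.1^4 - (p.1 + p.2 - n)^4 + p.2^4 - n^4 : ℤ) : ℝ)|⁻¹ *
              (‖v p.1‖ * ‖v (p.1 + p.2 - n)‖ * ‖v p.2‖))
          = ((1 + (n:ℝ)^2) ^ ((s+2)/2)
              * |((p.1^4 - (p.1 + p.2 - n)^4 + p.2^4 - n^4 : ℤ) : ℝ)|⁻¹)
            * (‖v p.1‖ * ‖v (p.1 + p.2 - n)‖ * ‖v p.2‖) := by ring
        _ ≤ (2 * 3 ^ s * ((1 + (p.1:ℝ)^2)^(s/2) + (1 + ((p.1 + p.2 - n : ℤ):ℝ)^2)^(s/2)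
              + (1 + (p.2:ℝ)^2)^(s/2)))
            * (‖v p.1‖ * ‖v (p.1 + p.2 - n)‖ * ‖v p.2‖) :=
            mul_le_mul_of_nonneg_right hw (by positivity)
        _ = _ := by ring
    have hfin : ENNReal.ofReal (2 * 3 ^ s)
        * ((Uf s v p.1 * Wf v (p.1 + p.2 - n) * Wf v p.2)
          + (Wf v p.1 * Uf s v (p.1 + p.2 - n) * Wf v p.2)
          + (Wf v p.1 * Wf v (p.1 + p.2 - n) * Uf s v p.2))
        = ENNReal.ofReal ((2 * 3 ^ s) *
            ((1 + (p.1:ℝ)^2)^(s/2) * ‖v p.1‖ * ‖v (p.1 + p.2 - n)‖ * ‖v p.2‖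
            + ‖v p.1‖ * ((1 + ((p.1 + p.2 - n : ℤ):ℝ)^2)^(s/2) * ‖v (p.1 + p.2 - n)‖) * ‖v p.2‖
            + ‖v p.1‖ * ‖v (p.1 + p.2 - n)‖ * ((1 + (p.2:ℝ)^2)^(s/2) * ‖v p.2‖))) := by
      rw [UWW, WUW, WWU, ← ENNReal.ofReal_add (by positivity) (by positivity),
        ← ENNReal.ofReal_add (by positivity) (by positivity),
        ← ENNReal.ofReal_mul (by positivity)]
    rw [hfin, ← ENNReal.ofReal_mul (by positivity)]
    exact ENNReal.ofReal_le_ofReal hkey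
  · rw [if_neg hp]
    simp only [norm_zero, ENNReal.ofReal_zero, mul_zero]
    exact zero_le
lemma step_norm {s : ℝ} (hs : 1/2 < s) (v : ℤ → ℂ) (n : ℤ) :
    ENNReal.ofReal ((1 + (n:ℝ)^2) ^ ((s+2)/2))
      * ENNReal.ofReal ‖∑' p : ℤ × ℤ, (if p.1 ≠ n ∧ p.2 ≠ n then
          (((p.1^4 - (p.1 + p.2 - n)^4 + p.2^4 - n^4 : ℤ) : ℂ))⁻¹ *
            (v p.1 * (starRingEnd ℂ) (v (p.1 + p.2 - n)) * v p.2) else 0)‖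
      ≤ ENNReal.ofReal (2 * 3 ^ s) * Gf s v n := by
  calc ENNReal.ofReal ((1 + (n:ℝ)^2) ^ ((s+2)/2))
      * ENNReal.ofReal ‖∑' p : ℤ × ℤ, (if p.1 ≠ n ∧ p.2 ≠ n then
          (((p.1^4 - (p.1 + p.2 - n)^4 + p.2^4 - n^4 : ℤ) : ℂ))⁻¹ *
            (v p.1 * (starRingEnd ℂ) (v (p.1 + p.2 - n)) * v p.2) else 0)‖
      ≤ ENNReal.ofReal ((1 + (n:ℝ)^2) ^ ((s+2)/2))
        * ∑' p : ℤ × ℤ, ENNReal.ofReal ‖(if p.1 ≠ n ∧ p.2 ≠ n then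
          (((p.1^4 - (p.1 + p.2 - n)^4 + p.2^4 - n^4 : ℤ) : ℂ))⁻¹ *
            (v p.1 * (starRingEnd ℂ) (v (p.1 + p.2 - n)) * v p.2) else 0)‖ :=
        mul_le_mul_right (enn_norm_tsum_le _) _
    _ = ∑' p : ℤ × ℤ, ENNReal.ofReal ((1 + (n:ℝ)^2) ^ ((s+2)/2))
        * ENNReal.ofReal ‖(if p.1 ≠ n ∧ p.2 ≠ n then
          (((p.1^4 - (p.1 + p.2 - n)^4 + p.2^4 - n^4 : ℤ) : ℂ))⁻¹ *
            (v p.1 * (starRingEnd ℂ) (v (p.1 + p.2 - n)) * v p.2) else 0)‖ :=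
        ENNReal.tsum_mul_left.symm
    _ ≤ ∑' p : ℤ × ℤ, ENNReal.ofReal (2 * 3 ^ s)
        * ((Uf s v p.1 * Wf v (p.1 + p.2 - n) * Wf v p.2)
          + (Wf v p.1 * Uf s v (p.1 + p.2 - n) * Wf v p.2)
          + (Wf v p.1 * Wf v (p.1 + p.2 - n) * Uf s v p.2)) :=
        ENNReal.tsum_le_tsum (fun p => hterm_bound hs v n p)
    _ = ENNReal.ofReal (2 * 3 ^ s)
        * ∑' p : ℤ × ℤ, ((Uf s v p.1 * Wf v (p.1 + p.2 - n) * Wf v p.2)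
          + (Wf v p.1 * Uf s v (p.1 + p.2 - n) * Wf v p.2)
          + (Wf v p.1 * Wf v (p.1 + p.2 - n) * Uf s v p.2)) := ENNReal.tsum_mul_left
    _ = ENNReal.ofReal (2 * 3 ^ s) * Gf s v n := by rw [Gf_eq]
lemma main_enn {s : ℝ} (hs : 1/2 < s) (v : ℤ → ℂ)
    (hv : Summable (fun m : ℤ => ((1 + (m : ℝ)^2) ^ s) * ‖v m‖^2))
    (F : ℤ → ℂ)
    (hF : ∀ n : ℤ, F n = ∑' p : ℤ × ℤ, (if p.1 ≠ n ∧ p.2 ≠ n then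
          (((p.1^4 - (p.1 + p.2 - n)^4 + p.2^4 - n^4 : ℤ) : ℂ))⁻¹ *
            (v p.1 * (starRingEnd ℂ) (v (p.1 + p.2 - n)) * v p.2) else 0)) :
    ∑' n : ℤ, ENNReal.ofReal (((1 + (n:ℝ)^2) ^ (s+2)) * ‖F n‖^2)
      ≤ ENNReal.ofReal ((3 * (2 * 3 ^ s) * (∑' m : ℤ, (1 + (m:ℝ)^2) ^ (-s))) ^ 2
          * (∑' m : ℤ, ((1 + (m : ℝ)^2) ^ s) * ‖v m‖^2) ^ 3) := by
  have hs0 : (0:ℝ) ≤ s := by linarith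
  set Ksq : ℝ := ∑' m : ℤ, (1 + (m:ℝ)^2) ^ (-s) with hKdef
  have hK0 : 0 ≤ Ksq := tsum_nonneg fun m => Real.rpow_nonneg (by positivity) _
  set Y : ℝ := ∑' m : ℤ, ((1 + (m : ℝ)^2) ^ s) * ‖v m‖^2 with hYdef
  have hY0 : 0 ≤ Y := tsum_nonneg fun m => by positivity
  set X : ℝ≥0∞ := ∑' m : ℤ, Uf s v m ^ 2 with hXdef
  have hXY : X = ENNReal.ofReal Y := step_hXY s v hv
  have hpern : ∀ n : ℤ, ENNReal.ofReal (((1 + (n:ℝ)^2) ^ (s+2)) * ‖F n‖^2)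
      = (ENNReal.ofReal ((1 + (n:ℝ)^2) ^ ((s+2)/2)) * ENNReal.ofReal ‖F n‖) ^ 2 := by
    intro n
    have e1 : ((1 + (n:ℝ)^2) ^ (s+2)) * ‖F n‖^2
        = ((1 + (n:ℝ)^2) ^ ((s+2)/2) * ‖F n‖)^2 := by
      rw [mul_pow, hhalf (s+2) _ (by positivity)]
    rw [e1, ENNReal.ofReal_pow (by positivity), ENNReal.ofReal_mul (by positivity)]
  have hKe : ∑' m : ℤ, Wf v m ≤ (ENNReal.ofReal Ksq) ^ (1/2:ℝ) * X ^ (1/2:ℝ) :=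
    step_l1 hs v
  calc ∑' n : ℤ, ENNReal.ofReal (((1 + (n:ℝ)^2) ^ (s+2)) * ‖F n‖^2)
      = ∑' n : ℤ, (ENNReal.ofReal ((1 + (n:ℝ)^2) ^ ((s+2)/2)) * ENNReal.ofReal ‖F n‖) ^ 2 :=
        tsum_congr hpern
    _ ≤ ∑' n : ℤ, (ENNReal.ofReal (2 * 3 ^ s) * Gf s v n) ^ 2 := by
        refine ENNReal.tsum_le_tsum fun n => ?_
        have h := step_norm hs v n
        rw [← hF n] at h
        have h2 := mul_le_mul' h h
        rw [← sq, ← sq] at h2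
        exact h2
    _ = (ENNReal.ofReal (2 * 3 ^ s)) ^ 2 * ∑' n : ℤ, Gf s v n ^ 2 := by
        simp_rw [mul_pow]
        exact ENNReal.tsum_mul_left
    _ ≤ (ENNReal.ofReal (2 * 3 ^ s)) ^ 2 * ((3 * (∑' m : ℤ, Wf v m) ^ 2) ^ 2 * X) :=
        mul_le_mul_right (step_l2 s v) _
    _ ≤ (ENNReal.ofReal (2 * 3 ^ s)) ^ 2
        * ((3 * ((ENNReal.ofReal Ksq) ^ (1/2:ℝ) * X ^ (1/2:ℝ)) ^ 2) ^ 2 * X) := by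
        gcongr
    _ = ENNReal.ofReal ((3 * (2 * 3 ^ s) * Ksq) ^ 2 * Y ^ 3) := by
        rw [mul_pow ((ENNReal.ofReal Ksq) ^ (1/2:ℝ)), sqrt_sq_enn, sqrt_sq_enn, hXY]
        have h3 : (0:ℝ) ≤ 3 * (2 * 3 ^ s) := by positivity
        have hA0 : (0:ℝ) ≤ 3 * (2 * 3 ^ s) * Ksq := mul_nonneg h3 hK0
        rw [ENNReal.ofReal_mul (sq_nonneg _), ENNReal.ofReal_pow hA0,
          ENNReal.ofReal_pow hY0, ENNReal.ofReal_mul h3,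
          ENNReal.ofReal_mul (by norm_num : (0:ℝ) ≤ 3)]
        simp only [ENNReal.ofReal_ofNat]
        ring
theorem normal_form_boundary_smoothing (s : ℝ) (hs : 1/2 < s) :
    ∃ C : ℝ, 0 < C ∧ ∀ v : ℤ → ℂ,
      Summable (fun m : ℤ => ((1 + (m : ℝ)^2) ^ s) * ‖v m‖^2) →
      Real.sqrt (∑' n : ℤ, ((1 + (n : ℝ)^2) ^ (s+2)) *
          ‖∑' p : ℤ × ℤ, (if p.1 ≠ n ∧ p.2 ≠ n then
              (((p.1^4 - (p.1 + p.2 - n)^4 + p.2^4 - n^4 : ℤ) : ℂ))⁻¹ *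
                (v p.1 * (starRingEnd ℂ) (v (p.1 + p.2 - n)) * v p.2)
            else 0)‖^2)
        ≤ C * (Real.sqrt (∑' m : ℤ, ((1 + (m : ℝ)^2) ^ s) * ‖v m‖^2))^3 := by
  have hs0 : (0:ℝ) ≤ s := by linarith
  have hKsum := K_summable hs
  have hKpos : 0 < ∑' m : ℤ, (1 + (m:ℝ)^2) ^ (-s) := by
    refine Summable.tsum_pos hKsum (fun m => Real.rpow_nonneg (by positivity) _) 0 ?_
    positivity
  have hCpos : (0:ℝ) < 3 * (2 * 3 ^ s) * (∑' m : ℤ, (1 + (m:ℝ)^2) ^ (-s)) :=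
    mul_pos (by positivity) hKpos
  refine ⟨3 * (2 * 3 ^ s) * (∑' m : ℤ, (1 + (m:ℝ)^2) ^ (-s)), hCpos, ?_⟩
  intro v hv
  have hmain := main_enn hs v hv
    (fun n => ∑' p : ℤ × ℤ, (if p.1 ≠ n ∧ p.2 ≠ n then
      (((p.1^4 - (p.1 + p.2 - n)^4 + p.2^4 - n^4 : ℤ) : ℂ))⁻¹ *
        (v p.1 * (starRingEnd ℂ) (v (p.1 + p.2 - n)) * v p.2) else 0))
    (fun n => rfl)
  set Ksq : ℝ := ∑' m : ℤ, (1 + (m:ℝ)^2) ^ (-s) with hKdef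
  set Y : ℝ := ∑' m : ℤ, ((1 + (m : ℝ)^2) ^ s) * ‖v m‖^2 with hYdef
  have hY0 : 0 ≤ Y := hYdef ▸ tsum_nonneg fun m => by positivity
  set a : ℤ → ℝ := fun n => ((1 + (n : ℝ)^2) ^ (s+2)) *
      ‖∑' p : ℤ × ℤ, (if p.1 ≠ n ∧ p.2 ≠ n then
          (((p.1^4 - (p.1 + p.2 - n)^4 + p.2^4 - n^4 : ℤ) : ℂ))⁻¹ *
            (v p.1 * (starRingEnd ℂ) (v (p.1 + p.2 - n)) * v p.2)
        else 0)‖^2 with hadef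
  have han : ∀ n, 0 ≤ a n := fun n => by
    rw [hadef]
    positivity
  have hENN : ∑' n : ℤ, ENNReal.ofReal (a n)
      ≤ ENNReal.ofReal ((3 * (2 * 3 ^ s) * Ksq) ^ 2 * Y ^ 3) := hmain
  have hne : ∑' n : ℤ, ENNReal.ofReal (a n) ≠ ⊤ :=
    ne_top_of_le_ne_top ENNReal.ofReal_ne_top hENN
  have hB0 : (0:ℝ) ≤ (3 * (2 * 3 ^ s) * Ksq) ^ 2 * Y ^ 3 :=
    mul_nonneg (sq_nonneg _) (pow_nonneg hY0 3)
  have hta : ∑' n : ℤ, a n ≤ (3 * (2 * 3 ^ s) * Ksq) ^ 2 * Y ^ 3 := by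
    have h1 : ∑' n : ℤ, a n = (∑' n : ℤ, ENNReal.ofReal (a n)).toReal := by
      rw [ENNReal.tsum_toReal_eq (fun n => ENNReal.ofReal_ne_top)]
      exact tsum_congr fun n => (ENNReal.toReal_ofReal (han n)).symm
    rw [h1]
    calc (∑' n : ℤ, ENNReal.ofReal (a n)).toReal
        ≤ (ENNReal.ofReal ((3 * (2 * 3 ^ s) * Ksq) ^ 2 * Y ^ 3)).toReal :=
          ENNReal.toReal_mono ENNReal.ofReal_ne_top hENN
      _ = _ := ENNReal.toReal_ofReal hB0
  have hfin : Real.sqrt (∑' n : ℤ, a n)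
      ≤ Real.sqrt ((3 * (2 * 3 ^ s) * Ksq) ^ 2 * Y ^ 3) := Real.sqrt_le_sqrt hta
  have heq : Real.sqrt ((3 * (2 * 3 ^ s) * Ksq) ^ 2 * Y ^ 3)
      = (3 * (2 * 3 ^ s) * Ksq) * (Real.sqrt Y) ^ 3 := by
    have hy3 : Y ^ 3 = ((Real.sqrt Y) ^ 3) ^ 2 := by
      linear_combination (-(Y^2 + Y * (Real.sqrt Y)^2 + (Real.sqrt Y)^4)) * Real.sq_sqrt hY0
    rw [show (3 * (2 * 3 ^ s) * Ksq) ^ 2 * Y ^ 3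
        = ((3 * (2 * 3 ^ s) * Ksq) * (Real.sqrt Y) ^ 3) ^ 2 by rw [hy3]; ring]
    exact Real.sqrt_sq (mul_nonneg hCpos.le (pow_nonneg (Real.sqrt_nonneg Y) 3))
  exact hfin.trans_eq heq
end
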